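/- Let f : ℝ^d → [0,∞) be integrable, Θ ⊆ ℝ^d nonempty and closed with C⁻¹ := ∫_Θ f > 0, and ρ_k ↑ ∞. Define probability densities π̄(θ) = C·f(θ)·1_{θ∈Θ} and π̃_k(θ) = C_k·f(θ)·exp(-(ρ_k/2)·dist(θ,Θ)²), where C_k normalizes. Then the total variation distance (1/2)∫ |π̃_k(θ) − π̄(θ)| dθ converges to 0 as k → ∞. -/
import Mathlib


open Metric Real MeasureTheory Filter
open Topology

theorem relaxed_posterior_tv_convergence
    (d : ℕ) (f : EuclideanSpace ℝ (Fin d) → ℝ)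
    (hf_nonneg : ∀ θ, 0 ≤ f θ) (hf_int : Integrable f)
    (Θ : Set (EuclideanSpace ℝ (Fin d))) (hΘ : Θ.Nonempty) (hΘclosed : IsClosed Θ)
    (hpos : 0 < ∫ θ in Θ, f θ)
    (ρ : ℕ → ℝ) (hρ_mono : Monotone ρ) (hρ_top : Tendsto ρ atTop atTop)
    (C : ℝ) (hC : C = (∫ θ in Θ, f θ)⁻¹)
    (Ck : ℕ → ℝ)
    (hCk : ∀ k, Ck k = (∫ θ, f θ * Real.exp (-(ρ k / 2) * (infDist θ Θ) ^ 2))⁻¹) :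
    Tendsto
      (fun k => (1 / 2 : ℝ) *
        ∫ θ, |Ck k * (f θ * Real.exp (-(ρ k / 2) * (infDist θ Θ) ^ 2)) -
              C * (f θ * Θ.indicator (fun _ => (1 : ℝ)) θ)|)
      atTop (nhds 0) := by
  have hΘmeas : MeasurableSet Θ := hΘclosed.measurableSet
  set F : ℕ → EuclideanSpace ℝ (Fin d) → ℝ :=
    fun k θ => f θ * Real.exp (-(ρ k / 2) * (infDist θ Θ) ^ 2) with hFdef
  have hCpos : 0 < C := by rw [hC]; positivity
  -- measurability
  have hFmeas : ∀ k, AEStronglyMeasurable (F k) volume := by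
    intro k
    exact hf_int.aestronglyMeasurable.mul
      ((Real.continuous_exp.comp
        (continuous_const.mul ((continuous_infDist_pt Θ).pow 2))).aestronglyMeasurable)
  have hgmeas : AEStronglyMeasurable
      (fun θ => f θ * Θ.indicator (fun _ => (1:ℝ)) θ) volume :=
    hf_int.aestronglyMeasurable.mul
      ((measurable_const.indicator hΘmeas).aestronglyMeasurable)
  -- basic pointwise bounds when ρ k ≥ 0
  have hexp_le : ∀ k θ, 0 ≤ ρ k → Real.exp (-(ρ k / 2) * (infDist θ Θ) ^ 2) ≤ 1 := by
    intro k θ hk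
    rw [Real.exp_le_one_iff]
    have : 0 ≤ (ρ k / 2) * (infDist θ Θ) ^ 2 := by positivity
    nlinarith
  have hFnonneg : ∀ k θ, 0 ≤ F k θ := fun k θ =>
    mul_nonneg (hf_nonneg θ) (Real.exp_pos _).le
  have hFle : ∀ k θ, 0 ≤ ρ k → F k θ ≤ f θ := fun k θ hk =>
    mul_le_of_le_one_right (hf_nonneg θ) (hexp_le k θ hk)
  have hFint : ∀ k, 0 ≤ ρ k → Integrable (F k) := by
    intro k hk
    refine hf_int.mono' (hFmeas k) (ae_of_all _ fun θ => ?_)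
    rw [Real.norm_eq_abs, abs_of_nonneg (hFnonneg k θ)]
    exact hFle k θ hk
  -- g as indicator
  have hlow : ∀ k, 0 ≤ ρ k → (∫ θ in Θ, f θ) ≤ ∫ θ, F k θ := by
    intro k hk
    rw [← integral_indicator hΘmeas]
    refine integral_mono (hf_int.indicator hΘmeas) (hFint k hk) fun θ => ?_
    by_cases hθ : θ ∈ Θ
    · simp only [Set.indicator_of_mem hθ, hFdef]
      rw [infDist_zero_of_mem hθ]
      simp
    · simp only [Set.indicator_of_notMem hθ]
      exact hFnonneg k θ
  have hρ_ev : ∀ᶠ k in atTop, 0 ≤ ρ k := hρ_top.eventually_ge_atTop 0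
  -- pointwise limit of F k θ
  have hFlim : ∀ θ, Tendsto (fun k => F k θ) atTop
      (𝓝 (f θ * Θ.indicator (fun _ => (1:ℝ)) θ)) := by
    intro θ
    by_cases hθ : θ ∈ Θ
    · simp only [hFdef, infDist_zero_of_mem hθ, Set.indicator_of_mem hθ]
      norm_num
    · simp only [hFdef, Set.indicator_of_notMem hθ, mul_zero]
      have hd : 0 < infDist θ Θ := (IsClosed.notMem_iff_infDist_pos hΘclosed hΘ).mp hθ
      have h2 : Tendsto (fun k => (ρ k / 2) * (infDist θ Θ) ^ 2) atTop atTop :=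
        Tendsto.atTop_mul_const (by positivity) (hρ_top.atTop_div_const (by norm_num))
      have h1 : Tendsto (fun k => -((ρ k / 2) * (infDist θ Θ) ^ 2)) atTop atBot :=
        tendsto_neg_atTop_atBot.comp h2
      have h3 : Tendsto (fun k => Real.exp (-(ρ k / 2) * (infDist θ Θ) ^ 2)) atTop (𝓝 0) := by
        simpa [Function.comp_def, neg_mul] using Real.tendsto_exp_atBot.comp h1
      simpa using (tendsto_const_nhds (x := f θ)).mul h3
  -- integral convergence
  have hIlim : Tendsto (fun k => ∫ θ, F k θ) atTop (𝓝 (∫ θ in Θ, f θ)) := by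
    rw [← integral_indicator hΘmeas]
    refine tendsto_integral_filter_of_dominated_convergence f
      (Eventually.of_forall hFmeas) ?_ hf_int (ae_of_all _ fun θ => ?_)
    · filter_upwards [hρ_ev] with k hk
      refine ae_of_all _ fun θ => ?_
      rw [Real.norm_eq_abs, abs_of_nonneg (hFnonneg k θ)]
      exact hFle k θ hk
    · have := hFlim θ
      by_cases hθ : θ ∈ Θ
      · simpa [Set.indicator_of_mem hθ] using this
      · simpa [Set.indicator_of_notMem hθ] using this
  have hClim : Tendsto Ck atTop (𝓝 C) := by
    rw [hC]
    simp only [funext hCk]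
    exact hIlim.inv₀ hpos.ne'
  have hCk_bd : ∀ᶠ k in atTop, Ck k ≤ C ∧ 0 ≤ Ck k := by
    filter_upwards [hρ_ev] with k hk
    have h1 := hlow k hk
    have h2 : 0 < ∫ θ, F k θ := lt_of_lt_of_le hpos h1
    constructor
    · rw [hCk k, hC]
      exact inv_anti₀ hpos h1
    · rw [hCk k]
      positivity
  -- main dominated convergence
  have hmain : Tendsto
      (fun k => ∫ θ, |Ck k * (f θ * Real.exp (-(ρ k / 2) * (infDist θ Θ) ^ 2)) -
              C * (f θ * Θ.indicator (fun _ => (1 : ℝ)) θ)|) atTop (𝓝 0) := by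
    have h0 : (0:ℝ) = ∫ _θ : EuclideanSpace ℝ (Fin d), (0:ℝ) := by simp
    rw [h0]
    refine tendsto_integral_filter_of_dominated_convergence (fun θ => 2 * C * f θ)
      ?_ ?_ (by exact (hf_int.const_mul (2*C))) (ae_of_all _ fun θ => ?_)
    · refine Eventually.of_forall fun k => ?_
      have : AEStronglyMeasurable
          (fun θ => Ck k * F k θ - C * (f θ * Θ.indicator (fun _ => (1:ℝ)) θ)) volume :=
        ((hFmeas k).const_mul _).sub (hgmeas.const_mul _)
      simpa only [Real.norm_eq_abs] using this.norm
    · filter_upwards [hCk_bd, hρ_ev] with k ⟨hkC, hk0⟩ hkρ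
      refine ae_of_all _ fun θ => ?_
      have hind_le : Θ.indicator (fun _ => (1:ℝ)) θ ≤ 1 := by
        by_cases hθ : θ ∈ Θ <;> simp [hθ]
      have hind_nn : 0 ≤ Θ.indicator (fun _ => (1:ℝ)) θ := by
        by_cases hθ : θ ∈ Θ <;> simp [hθ]
      have h1 : Ck k * F k θ ≤ C * f θ :=
        mul_le_mul hkC (hFle k θ hkρ) (hFnonneg k θ) hCpos.le
      have h2 : C * (f θ * Θ.indicator (fun _ => (1:ℝ)) θ) ≤ C * f θ := by
        have := mul_le_of_le_one_right (hf_nonneg θ) hind_le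
        nlinarith
      have h3 : 0 ≤ Ck k * F k θ := mul_nonneg hk0 (hFnonneg k θ)
      have h4 : 0 ≤ C * (f θ * Θ.indicator (fun _ => (1:ℝ)) θ) :=
        mul_nonneg hCpos.le (mul_nonneg (hf_nonneg θ) hind_nn)
      show ‖|Ck k * F k θ - C * (f θ * Θ.indicator (fun _ => (1:ℝ)) θ)|‖ ≤ 2 * C * f θ
      rw [Real.norm_eq_abs, abs_abs, abs_sub_le_iff]
      constructor <;> nlinarith
    · have h5 : Tendsto (fun k => Ck k * F k θ) atTop
        (𝓝 (C * (f θ * Θ.indicator (fun _ => (1:ℝ)) θ))) := hClim.mul (hFlim θ)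
      have h6 := (h5.sub (tendsto_const_nhds
        (x := C * (f θ * Θ.indicator (fun _ => (1:ℝ)) θ)))).abs
      exact (by simpa only [sub_self, abs_zero] using h6)
  have := hmain.const_mul (1/2 : ℝ)
  simpa using this
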